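/- arXiv:2206.06387 — 5 statements merged into one kernel-verified Lean document; each statement's English description precedes it below -/
import Mathlib

section
/- For any symmetric real n×n matrix M with vanishing diagonal, M can be written as a nonnegative linear combination of the outer products m m^T where m ranges over vectors in {-1,+1}^n (i.e., the set of such outer products spans the space of symmetric matrices with zero diagonal). -/
private def sgn {n : ℕ} (s : Fin n → Bool) (k : Fin n) : ℝ := if s k then -1 else 1

private lemma sgn_update {n : ℕ} (s : Fin n → Bool) (k l : Fin n) :
    sgn (Function.update s k (!s k)) l = if l = k then - sgn s l else sgn s l := by
  unfold sgn
  rcases eq_or_ne l k with rfl | h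
  · simp; cases s l <;> simp
  · rw [Function.update_of_ne h, if_neg h]

private lemma flip_sum {n : ℕ} (i : Fin n) (f : (Fin n → Bool) → ℝ)
    (h : ∀ s, f (Function.update s i (!s i)) = - f s) :
    ∑ s : Fin n → Bool, f s = 0 := by
  have hinv : Function.Involutive (fun s : Fin n → Bool => Function.update s i (!s i)) := by
    intro s; simp
  have h1 : ∑ s : Fin n → Bool, f (Function.update s i (!s i)) = ∑ s : Fin n → Bool, f s :=
    Equiv.sum_comp hinv.toPerm f
  have h2 : ∑ s : Fin n → Bool, f (Function.update s i (!s i)) = - ∑ s : Fin n → Bool, f s := by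
    rw [← Finset.sum_neg_distrib]
    exact Finset.sum_congr rfl fun s _ => h s
  linarith

private lemma pair_sum {n : ℕ} {i j : Fin n} (hij : i ≠ j) :
    ∑ s : Fin n → Bool, sgn s i * sgn s j = 0 := by
  apply flip_sum i
  intro s
  simp only [sgn_update]
  split_ifs <;> first | ring1 | tauto | simp_all

private lemma quad_sum {n : ℕ} {i j : Fin n} (hij : i ≠ j) (a b : Fin n) :
    ∑ s : Fin n → Bool, sgn s a * sgn s b * sgn s i * sgn s j =
      if (a = i ∧ b = j) ∨ (a = j ∧ b = i) then (2:ℝ)^n else 0 := by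
  by_cases hc : (a = i ∧ b = j) ∨ (a = j ∧ b = i)
  · rw [if_pos hc]
    have hsq : ∀ (k l : Fin n) (s : Fin n → Bool), sgn s k * sgn s l * sgn s k * sgn s l = 1 := by
      intro k l s; unfold sgn; split <;> split <;> norm_num
    rcases hc with ⟨rfl, rfl⟩ | ⟨rfl, rfl⟩
    · calc ∑ s : Fin n → Bool, sgn s a * sgn s b * sgn s a * sgn s b
          = ∑ _s : Fin n → Bool, (1:ℝ) := Finset.sum_congr rfl fun s _ => hsq a b s
        _ = 2^n := by simp [Finset.card_univ]
    · calc ∑ s : Fin n → Bool, sgn s a * sgn s b * sgn s b * sgn s a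
          = ∑ _s : Fin n → Bool, (1:ℝ) := by
            refine Finset.sum_congr rfl fun s _ => ?_
            have := hsq a b s; nlinarith [hsq a b s]
        _ = 2^n := by simp [Finset.card_univ]
  · rw [if_neg hc]
    push_neg at hc
    by_cases hab : a = b
    · subst hab
      apply flip_sum i
      intro s
      simp only [sgn_update]
      split_ifs <;> first | ring1 | tauto | simp_all
    · by_cases hai : a = i
      · subst hai
        have hbj : b ≠ j := hc.1 rfl
        apply flip_sum b
        intro s
        simp only [sgn_update]
        split_ifs <;> first | ring1 | tauto | simp_all
      · by_cases haj : a = j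
        · subst haj
          have hbi : b ≠ i := fun h => (hc.2 rfl) h
          apply flip_sum b
          intro s
          simp only [sgn_update]
          split_ifs <;> first | ring1 | tauto | simp_all
        · apply flip_sum a
          intro s
          simp only [sgn_update]
          split_ifs <;> first | ring1 | tauto | simp_all

/-- Any symmetric real `n×n` matrix `M` with vanishing diagonal can be
written (on its off-diagonal entries) as a nonnegative linear combination of the outer
products `m mᵀ` with `m ∈ {-1,+1}^n`; the sign vectors are encoded by `s : Fin n → Bool`
via `m i = if s i then -1 else 1`. -/
theorem outer_products_span_nonneg (n : ℕ) (M : Matrix (Fin n) (Fin n) ℝ)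
    (hsym : M.IsSymm) (hdiag : ∀ i, M i i = 0) :
    ∃ lam : (Fin n → Bool) → ℝ, (∀ s, 0 ≤ lam s) ∧
      ∀ i j, i ≠ j →
        M i j = ∑ s : Fin n → Bool,
          lam s * (if s i then (-1 : ℝ) else 1) * (if s j then (-1 : ℝ) else 1) := by
  classical
  set lam : (Fin n → Bool) → ℝ := fun s =>
    ((∑ a, ∑ b, M a b * sgn s a * sgn s b) + ∑ a, ∑ b, |M a b|) / 2 ^ (n + 1) with hlam
  refine ⟨lam, ?_, ?_⟩
  · intro s
    have key : -(∑ a, ∑ b, |M a b|) ≤ ∑ a, ∑ b, M a b * sgn s a * sgn s b := by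
      rw [← Finset.sum_neg_distrib]
      refine Finset.sum_le_sum fun a _ => ?_
      rw [← Finset.sum_neg_distrib]
      refine Finset.sum_le_sum fun b _ => ?_
      have h1 : sgn s a = 1 ∨ sgn s a = -1 := by unfold sgn; split <;> simp
      have h2 : sgn s b = 1 ∨ sgn s b = -1 := by unfold sgn; split <;> simp
      rcases h1 with h1 | h1 <;> rcases h2 with h2 | h2 <;> rw [h1, h2] <;>
        nlinarith [neg_abs_le (M a b), le_abs_self (M a b)]
    have hpos : (0:ℝ) < 2 ^ (n + 1) := by positivity
    rw [hlam]
    apply div_nonneg _ (le_of_lt hpos)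
    linarith
  · intro i j hij
    have hs : ∀ s : Fin n → Bool,
        lam s * (if s i then (-1 : ℝ) else 1) * (if s j then (-1 : ℝ) else 1)
          = lam s * (sgn s i * sgn s j) := by
      intro s; unfold sgn; ring
    rw [Finset.sum_congr rfl fun s _ => hs s]
    have expand : ∀ s : Fin n → Bool, lam s * (sgn s i * sgn s j) =
        (∑ a, ∑ b, M a b * (sgn s a * sgn s b * sgn s i * sgn s j)) / 2 ^ (n + 1)
        + (∑ a, ∑ b, |M a b|) / 2 ^ (n + 1) * (sgn s i * sgn s j) := by
      intro s
      have hA : (∑ a, ∑ b, M a b * sgn s a * sgn s b) * (sgn s i * sgn s j)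
          = ∑ a, ∑ b, M a b * (sgn s a * sgn s b * sgn s i * sgn s j) := by
        rw [Finset.sum_mul]
        refine Finset.sum_congr rfl fun a _ => ?_
        rw [Finset.sum_mul]
        exact Finset.sum_congr rfl fun b _ => by ring
      simp only [hlam]
      rw [div_mul_eq_mul_div, add_mul, add_div, hA]
      ring
    rw [Finset.sum_congr rfl fun s _ => expand s]
    rw [Finset.sum_add_distrib]
    have part2 : ∑ s : Fin n → Bool,
        (∑ a, ∑ b, |M a b|) / 2 ^ (n + 1) * (sgn s i * sgn s j) = 0 := by
      rw [← Finset.mul_sum, pair_sum hij, mul_zero]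
    rw [part2, add_zero]
    have swap : ∑ s : Fin n → Bool,
        (∑ a, ∑ b, M a b * (sgn s a * sgn s b * sgn s i * sgn s j)) / 2 ^ (n + 1)
        = (∑ a, ∑ b, M a b * (if (a = i ∧ b = j) ∨ (a = j ∧ b = i) then (2:ℝ)^n else 0))
            / 2 ^ (n + 1) := by
      rw [← Finset.sum_div]
      congr 1
      rw [Finset.sum_comm]
      refine Finset.sum_congr rfl fun a _ => ?_
      rw [Finset.sum_comm]
      refine Finset.sum_congr rfl fun b _ => ?_
      rw [← Finset.mul_sum, quad_sum hij a b]
    rw [swap]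
    have inner : ∀ a : Fin n,
        ∑ b, M a b * (if (a = i ∧ b = j) ∨ (a = j ∧ b = i) then (2:ℝ)^n else 0)
        = (if a = i then M a j * 2^n else 0) + (if a = j then M a i * 2^n else 0) := by
      intro a
      have hb : ∀ b : Fin n,
          M a b * (if (a = i ∧ b = j) ∨ (a = j ∧ b = i) then (2:ℝ)^n else 0)
          = (if b = j then (if a = i then M a j * 2^n else 0) else 0)
            + (if b = i then (if a = j then M a i * 2^n else 0) else 0) := by
        intro b
        split_ifs <;> first | ring1 | tauto | simp_all | (subst_vars; simp_all) | (exfalso; tauto)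
      rw [Finset.sum_congr rfl fun b _ => hb b, Finset.sum_add_distrib]
      simp [Finset.sum_ite_eq']
    rw [Finset.sum_congr rfl fun a _ => inner a, Finset.sum_add_distrib]
    simp only [Finset.sum_ite_eq', Finset.mem_univ, if_true]
    have hMji : M j i = M i j := by
      have := congrFun (congrFun hsym i) j
      simpa [Matrix.transpose_apply] using this
    rw [hMji]
    field_simp
    ring
end

section
/- The set of outer products {m m^T mod its diagonal : m ∈ {-1,+1}^n, m_n = +1}, viewed as vectors in the space of symmetric n×n matrices with vanishing diagonal, forms a tight frame: there exists a > 0 such that for every symmetric matrix A with zero diagonal, a·‖A‖_F² = Σ_m ⟨A, m m^T⟩², where the inner product is the trace inner product restricted to off-diagonal entries. -/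
/-!
Write `Q(m) = Σ_{i,j} A_{ij} m_i m_j`. Averaged over all sign vectors, `m_i m_j m_k m_l` with `i ≠ j`
is `1` when `{k, l} = {i, j}` (every coordinate then occurs an even number of times) and `0`
otherwise. The zero diagonal of `A` means only such terms occur in `Q(m)²`, so
`Σ_m Q(m)² = 2^N Σ_{i,j} A_{ij} (A_{ij} + A_{ji})`. Since `Q(-m) = Q(m)`, fixing the last sign
halves the sum.
-/

open Finset

section BoolSign

variable {R : Type*} [CommRing R]

def boolSign (b : Bool) : R := if b then -1 else 1

@[simp] lemma boolSign_not (b : Bool) : (boolSign (!b) : R) = -boolSign b := by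
  cases b <;> simp [boolSign]

lemma sum_boolSign_pow (e : ℕ) : ∑ b : Bool, (boolSign b : R) ^ e = if Even e then 2 else 0 := by
  rcases Nat.even_or_odd e with h | h
  · simp [boolSign, h.neg_one_pow, h, one_add_one_eq_two]
  · simp [boolSign, h.neg_one_pow, Nat.not_even_iff_odd.mpr h]

end BoolSign

lemma even_count_pair_pair_iff {ι : Type*} [DecidableEq ι] {i j : ι} (hij : i ≠ j) (k l : ι) :
    (∀ p, Even (Multiset.count p {i, j, k, l})) ↔ (k = i ∧ l = j) ∨ (k = j ∧ l = i) := by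
  simp only [Multiset.insert_eq_cons, Multiset.count_cons, Multiset.count_singleton]
  constructor
  · intro h
    have hi := h i
    have hj := h j
    split_ifs at hi hj <;> simp_all
  · rintro (⟨rfl, rfl⟩ | ⟨rfl, rfl⟩) p <;> split_ifs <;> decide

section SignVectors

variable {R : Type*} [CommRing R] {ι : Type*} [Fintype ι]

def signQuadForm (A : Matrix ι ι R) (s : ι → Bool) : R :=
  ∑ i, ∑ j, A i j * boolSign (s i) * boolSign (s j)

lemma signQuadForm_not (A : Matrix ι ι R) (s : ι → Bool) :
    signQuadForm A (fun p => !s p) = signQuadForm A s := by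
  simp [signQuadForm]

variable [DecidableEq ι]

lemma two_nsmul_sum_filter_eq_sum_of_flip_invariant {M : Type*} [AddCommMonoid M]
    (g : (ι → Bool) → M) (hg : ∀ s, g (fun p => !s p) = g s) (q : ι) :
    2 • ∑ s ∈ univ.filter (fun s : ι → Bool => s q = false), g s = ∑ s, g s := by
  have hflip : ∑ s ∈ univ.filter (fun s : ι → Bool => ¬s q = false), g s =
      ∑ s ∈ univ.filter (fun s : ι → Bool => s q = false), g s :=
    sum_equiv (Equiv.piCongrRight fun _ => Equiv.boolNot) (by simp) fun s _ => (hg s).symm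
  rw [two_nsmul, ← sum_filter_add_sum_filter_not univ (fun s : ι → Bool => s q = false), hflip]

lemma sum_prod_boolSign_pow (c : ι → ℕ) :
    ∑ s : ι → Bool, ∏ p, (boolSign (s p) : R) ^ c p =
      if ∀ p, Even (c p) then 2 ^ Fintype.card ι else 0 := by
  rw [← Fintype.prod_sum (fun p b => (boolSign b : R) ^ c p)]
  simp only [sum_boolSign_pow, Fintype.prod_ite_zero, prod_const, card_univ]

lemma prod_map_boolSign_eq_prod_pow_count (s : ι → Bool) (m : Multiset ι) :
    (m.map fun p => (boolSign (s p) : R)).prod = ∏ p, (boolSign (s p) : R) ^ m.count p := by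
  rw [prod_multiset_map_count]
  exact prod_subset (subset_univ _) fun p _ hp => by
    simp [Multiset.count_eq_zero.mpr (by simpa using hp)]

lemma sum_boolSign_mul_four {i j : ι} (hij : i ≠ j) (k l : ι) :
    ∑ s : ι → Bool, (boolSign (s i) * boolSign (s j) * boolSign (s k) * boolSign (s l) : R) =
      if (k = i ∧ l = j) ∨ (k = j ∧ l = i) then 2 ^ Fintype.card ι else 0 := by
  have h (s : ι → Bool) : (boolSign (s i) * boolSign (s j) * boolSign (s k) * boolSign (s l) : R) =
      ∏ p, (boolSign (s p) : R) ^ Multiset.count p {i, j, k, l} := by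
    rw [← prod_map_boolSign_eq_prod_pow_count]
    simp [mul_assoc]
  simp only [h, sum_prod_boolSign_pow, even_count_pair_pair_iff hij]

lemma sum_boolSign_mul_signQuadForm (A : Matrix ι ι R) {i j : ι} (hij : i ≠ j) :
    ∑ s, boolSign (s i) * boolSign (s j) * signQuadForm A s =
      2 ^ Fintype.card ι * (A i j + A j i) := by
  have h (s : ι → Bool) : boolSign (s i) * boolSign (s j) * signQuadForm A s =
      ∑ k, ∑ l, A k l * (boolSign (s i) * boolSign (s j) * boolSign (s k) * boolSign (s l)) := by
    simp only [signQuadForm, mul_sum]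
    exact sum_congr rfl fun k _ => sum_congr rfl fun l _ => by ring
  simp only [h]
  rw [sum_comm]
  simp only [sum_comm (γ := ι → Bool), ← mul_sum, sum_boolSign_mul_four hij]
  rw [Fintype.sum_eq_add i j hij fun k hk => by simp [hk.1, hk.2]]
  simp only [hij, hij.symm, true_and, false_and, or_false, false_or, mul_ite, mul_zero,
    sum_ite_eq', mem_univ, ↓reduceIte]
  ring

lemma sum_signQuadForm_sq (A : Matrix ι ι R) (hA : ∀ i, A i i = 0) :
    ∑ s, signQuadForm A s ^ 2 = 2 ^ Fintype.card ι * ∑ i, ∑ j, A i j * (A i j + A j i) := by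
  have h (s : ι → Bool) : signQuadForm A s ^ 2 =
      ∑ i, ∑ j, A i j * (boolSign (s i) * boolSign (s j) * signQuadForm A s) := by
    rw [sq]
    nth_rewrite 1 [signQuadForm]
    simp only [sum_mul]
    exact sum_congr rfl fun i _ => sum_congr rfl fun j _ => by ring
  simp only [h]
  rw [sum_comm]
  simp only [sum_comm (γ := ι → Bool), mul_sum]
  refine sum_congr rfl fun i _ => sum_congr rfl fun j _ => ?_
  rcases eq_or_ne i j with rfl | hij
  · simp [hA]
  · rw [← mul_sum, sum_boolSign_mul_signQuadForm A hij]
    ring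

end SignVectors

/-- The outer products `m mᵀ` (off-diagonal part), with
`m ∈ {-1,+1}^{n+1}` and last coordinate `+1`, form a tight frame for the space of
symmetric matrices with vanishing diagonal: there is `a > 0` such that for every
symmetric `A` with zero diagonal, `a‖A‖² = Σ_m ⟨A, m mᵀ⟩²`, where
`⟨A,B⟩ = Σ_{i≠j} A_{ij} B_{ij}`. Sign vectors are encoded by `s : Fin (n+1) → Bool`
with `s (last) = false`, via `m i = if s i then -1 else 1`. -/
theorem outer_products_tight_frame (n : ℕ) :
    ∃ a : ℝ, 0 < a ∧
      ∀ A : Matrix (Fin (n+1)) (Fin (n+1)) ℝ, A.IsSymm → (∀ i, A i i = 0) →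
        a * (∑ i, ∑ j, (A i j)^2) =
          ∑ s ∈ Finset.univ.filter
              (fun s : Fin (n+1) → Bool => s (Fin.last n) = false),
            (∑ i, ∑ j, A i j * (if s i then (-1 : ℝ) else 1) *
              (if s j then (-1 : ℝ) else 1))^2 := by
  refine ⟨2 ^ (n + 1), by positivity, fun A hA hdiag => ?_⟩
  have key := two_nsmul_sum_filter_eq_sum_of_flip_invariant (fun s => signQuadForm A s ^ 2)
    (fun s => by rw [signQuadForm_not]) (Fin.last n)
  rw [sum_signQuadForm_sq A hdiag, nsmul_eq_mul, Fintype.card_fin] at key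
  simp only [hA.apply] at key
  change _ = ∑ s ∈ _, signQuadForm A s ^ 2
  have hsq : ∑ i, ∑ j, A i j * (A i j + A i j) = 2 * ∑ i, ∑ j, A i j ^ 2 := by
    simp only [mul_sum]
    exact sum_congr rfl fun i _ => sum_congr rfl fun j _ => by ring
  rw [hsq, Nat.cast_ofNat] at key
  linarith
end

section
/- For vectors m = (-1)^b and m' = (-1)^{b'} in {-1,+1}^n with b, b' ∈ 𝔽₂^n, the inner product of the lower-triangular parts of their outer products equals n(n-1)/2 − 2Δ(n − Δ), where Δ = |b ⊕ b'| is the Hamming distance between b and b'. That is, Σ_{g<h} (-1)^{b_g⊕b_h}(-1)^{b'_g⊕b'_h} = n(n-1)/2 − 2Δ(n−Δ). -/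
/-- For `m = (-1)^b`, `m' = (-1)^{b'}` in `{-1,+1}^n`, the inner product
of the lower-triangular parts of the outer products `m mᵀ`, `m' m'ᵀ` is
`n(n-1)/2 − 2Δ(n−Δ)` where `Δ` is the Hamming distance between `b` and `b'`. -/
theorem gram_entries (n : ℕ) (b b' : Fin n → Bool) :
    ∑ p ∈ Finset.univ.filter (fun p : Fin n × Fin n => p.1 < p.2),
        ((if xor (b p.1) (b p.2) then (-1 : ℝ) else 1) *
          (if xor (b' p.1) (b' p.2) then (-1 : ℝ) else 1)) =
      (n * (n - 1) : ℝ) / 2 -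
        2 * ((Finset.univ.filter (fun i => b i ≠ b' i)).card : ℝ) *
          ((n : ℝ) - ((Finset.univ.filter (fun i => b i ≠ b' i)).card : ℝ)) := by
  set s : Fin n → ℝ := fun i => if b i ≠ b' i then -1 else 1 with hs
  -- rewrite summand
  have hterm : ∀ p : Fin n × Fin n,
      ((if xor (b p.1) (b p.2) then (-1 : ℝ) else 1) *
        (if xor (b' p.1) (b' p.2) then (-1 : ℝ) else 1)) = s p.1 * s p.2 := by
    intro p
    simp only [hs]
    cases hb1 : b p.1 <;> cases hb2 : b p.2 <;> cases hb1' : b' p.1 <;> cases hb2' : b' p.2 <;>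
      norm_num
  rw [Finset.sum_congr rfl (fun p _ => hterm p)]
  have hsq : ∀ i, s i * s i = 1 := by
    intro i; simp only [hs]; split <;> norm_num
  set Δ : ℕ := (Finset.univ.filter (fun i => b i ≠ b' i)).card with hΔ
  have hsum : ∑ i, s i = (n : ℝ) - 2 * Δ := by
    have : ∀ i, s i = 1 - 2 * (if b i ≠ b' i then (1:ℝ) else 0) := by
      intro i; simp only [hs]; split <;> norm_num
    rw [Finset.sum_congr rfl (fun i _ => this i)]
    rw [Finset.sum_sub_distrib, Finset.sum_const, ← Finset.mul_sum, Finset.sum_boole]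
    simp [hΔ]
  -- key identity
  have hprod : (∑ i, s i) * (∑ i, s i) = ∑ p : Fin n × Fin n, s p.1 * s p.2 := by
    rw [Finset.sum_mul_sum, ← Finset.univ_product_univ, Finset.sum_product]
  have hsplit : (∑ p : Fin n × Fin n, s p.1 * s p.2) =
      (∑ p ∈ Finset.univ.filter (fun p : Fin n × Fin n => p.1 < p.2), s p.1 * s p.2) +
      (∑ p ∈ Finset.univ.filter (fun p : Fin n × Fin n => ¬ p.1 < p.2), s p.1 * s p.2) :=
    (Finset.sum_filter_add_sum_filter_not _ _ _).symm
  have hsplit2 : (∑ p ∈ Finset.univ.filter (fun p : Fin n × Fin n => ¬ p.1 < p.2), s p.1 * s p.2) =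
      (∑ p ∈ Finset.univ.filter (fun p : Fin n × Fin n => p.2 < p.1), s p.1 * s p.2) +
      (∑ p ∈ Finset.univ.filter (fun p : Fin n × Fin n => p.1 = p.2), s p.1 * s p.2) := by
    rw [← Finset.sum_union]
    · apply Finset.sum_congr _ (fun _ _ => rfl)
      ext p
      simp only [Finset.mem_filter, Finset.mem_union, Finset.mem_univ, true_and]
      omega
    · rw [Finset.disjoint_filter]
      intro p _ h1 h2
      omega
  have hswap : (∑ p ∈ Finset.univ.filter (fun p : Fin n × Fin n => p.2 < p.1), s p.1 * s p.2) =
      (∑ p ∈ Finset.univ.filter (fun p : Fin n × Fin n => p.1 < p.2), s p.1 * s p.2) := by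
    apply Finset.sum_nbij' (fun p => (p.2, p.1)) (fun p => (p.2, p.1)) <;>
      simp [mul_comm]
  have hdiag : (∑ p ∈ Finset.univ.filter (fun p : Fin n × Fin n => p.1 = p.2), s p.1 * s p.2)
      = (n : ℝ) := by
    rw [Finset.sum_filter]
    rw [← Finset.univ_product_univ, Finset.sum_product]
    have : ∀ i : Fin n, (∑ j : Fin n, if i = j then s i * s j else 0) = 1 := by
      intro i
      rw [Finset.sum_ite_eq Finset.univ i (fun j => s i * s j)]
      simp [hsq i]
    rw [Finset.sum_congr rfl (fun i _ => this i)]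
    simp
  have key : 2 * (∑ p ∈ Finset.univ.filter (fun p : Fin n × Fin n => p.1 < p.2), s p.1 * s p.2)
      + (n : ℝ) = ((n : ℝ) - 2 * Δ) * ((n : ℝ) - 2 * Δ) := by
    rw [← hsum, hprod, hsplit, hsplit2, hswap, hdiag]; ring
  have hΔn : (Δ : ℝ) ≤ n := by
    have := Finset.card_filter_le Finset.univ (fun i => b i ≠ b' i)
    simp only [Finset.card_univ, Fintype.card_fin] at this
    exact_mod_cast this
  linarith [key]
end

section
/- The truncation error of the Ising evolution is bounded by the total truncated time weighted by the interaction strength: ½‖e^{−iH} − e^{−iH'}‖ ≤ ¼ Σ_{i≠j} |J_{ij}| · Σ_{m∈C} λ_m, where H = −Σ_{i<j} J_{ij} Σ_m λ_m m_i m_j Z_i Z_j and H' is obtained from H by dropping all terms with m in a set C. -/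
/-!
Both Hamiltonians are diagonal in the computational basis, so each evolution is the diagonal
matrix of phases `e^{-iE(x)}`, and the spectral norm of a diagonal matrix is the largest modulus
of its entries. Since `|e^{ia} - e^{ib}| ≤ |a - b|`, the error is at most the largest energy
difference, which is the energy of the dropped encodings `C` alone. With `|λ_m m_i m_j| = λ_m`
that energy is at most `Σ_{i<j} |J_{ij}| · Σ_{m ∈ C} λ_m`, and by symmetry of `J` the sum over
`i < j` is half the sum over `i ≠ j`.
-/

open Matrix NormedSpace

/-- The spectral (ℓ²-operator) norm of a complex matrix, via its action on Euclidean
space. -/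
noncomputable def specNorm {m : Type*} [Fintype m] [DecidableEq m]
    (A : Matrix m m ℂ) : ℝ :=
  ‖Matrix.toEuclideanCLM (𝕜 := ℂ) A‖

/-- The total Ising Hamiltonian `−Σ_{i<j} J_{ij} Σ_{s ∈ S} λ_s m_i m_j Z_i Z_j`
(encodings `m = (-1)^s` indexed by sign vectors `s ∈ S`), as a diagonal matrix in the
computational basis. -/
noncomputable def totalH (n : ℕ) (J : Matrix (Fin n) (Fin n) ℝ)
    (lam : (Fin n → Bool) → ℝ) (S : Finset (Fin n → Bool)) :
    Matrix (Fin n → Bool) (Fin n → Bool) ℂ :=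
  Matrix.diagonal fun x =>
    ((-(∑ i : Fin n, ∑ j ∈ Finset.univ.filter (fun j => i < j),
      J i j * ∑ s ∈ S, lam s * (if s i then (-1 : ℝ) else 1) *
        (if s j then (-1 : ℝ) else 1) *
        (if x i then (-1 : ℝ) else 1) * (if x j then (-1 : ℝ) else 1)) : ℝ) : ℂ)

open Finset
open scoped Matrix.Norms.L2Operator

lemma Complex.norm_exp_I_mul_ofReal_sub_exp_I_mul_ofReal_le (a b : ℝ) :
    ‖exp (I * a) - exp (I * b)‖ ≤ |a - b| := by
  have hfactor : exp (I * a) - exp (I * b) = exp (I * b) * (exp (I * ↑(a - b)) - 1) := by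
    rw [mul_sub, mul_one, ← Complex.exp_add]
    push_cast
    ring_nf
  rw [hfactor, norm_mul, norm_exp_I_mul_ofReal, one_mul]
  exact Real.norm_exp_I_mul_ofReal_sub_one_le

lemma specNorm_diagonal {m : Type*} [Fintype m] [DecidableEq m] (v : m → ℂ) :
    specNorm (diagonal v) = ‖v‖ :=
  l2_opNorm_diagonal v

lemma exp_neg_I_smul_diagonal_ofReal {m : Type*} [Fintype m] [DecidableEq m] (E : m → ℝ) :
    exp ((-Complex.I) • diagonal fun x => (E x : ℂ)) =
      diagonal fun x => Complex.exp (Complex.I * ↑(-E x)) := by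
  rw [← diagonal_smul, exp_diagonal]
  congr 1
  funext x
  simp only [Pi.exp_def, Pi.smul_apply, ← Complex.exp_eq_exp_ℂ, smul_eq_mul]
  push_cast
  ring_nf

lemma specNorm_exp_diagonal_sub_exp_diagonal_le {m : Type*} [Fintype m] [DecidableEq m]
    (E F : m → ℝ) :
    specNorm (exp ((-Complex.I) • diagonal (fun x => (E x : ℂ))) -
        exp ((-Complex.I) • diagonal (fun x => (F x : ℂ)))) ≤ ‖E - F‖ := by
  rw [exp_neg_I_smul_diagonal_ofReal, exp_neg_I_smul_diagonal_ofReal, diagonal_sub,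
    specNorm_diagonal]
  refine (pi_norm_le_iff_of_nonneg (norm_nonneg _)).2 fun x => ?_
  calc _ ≤ |-E x - -F x| := Complex.norm_exp_I_mul_ofReal_sub_exp_I_mul_ofReal_le _ _
    _ = ‖(E - F) x‖ := by rw [Real.norm_eq_abs, Pi.sub_apply, ← abs_neg]; ring_nf
    _ ≤ ‖E - F‖ := norm_le_pi_norm _ x

lemma sum_sum_ne_eq_two_nsmul_sum_sum_lt {ι M : Type*} [Fintype ι] [LinearOrder ι]
    [AddCommMonoid M] (f : ι → ι → M) (hf : ∀ i j, f i j = f j i) :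
    ∑ i, ∑ j ∈ univ.filter (fun j => j ≠ i), f i j =
      2 • ∑ i, ∑ j ∈ univ.filter (fun j => i < j), f i j := by
  have hsplit : ∀ i j, (if j ≠ i then f i j else 0) =
      (if i < j then f i j else 0) + (if j < i then f i j else 0) := by
    intro i j
    rcases lt_trichotomy i j with hij | rfl | hji
    · simp [hij, hij.ne', not_lt_of_gt hij]
    · simp
    · simp [hji, hji.ne, not_lt_of_gt hji]
  have hlower : ∑ i, ∑ j, (if j < i then f i j else 0) =
      ∑ i, ∑ j, (if i < j then f i j else 0) := by
    rw [sum_comm]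
    simp_rw [hf]
  simp only [sum_filter, hsplit, sum_add_distrib, hlower, two_nsmul]

section Ising

variable {n : ℕ} (J : Matrix (Fin n) (Fin n) ℝ) (lam : (Fin n → Bool) → ℝ)

/-- The eigenvalue `±1` of Pauli-`Z` on the basis state `b`. -/
def spin (b : Bool) : ℝ := if b then -1 else 1

lemma abs_spin (b : Bool) : |spin b| = 1 := by
  cases b <;> simp [spin]

def isingEnergy (S : Finset (Fin n → Bool)) (x : Fin n → Bool) : ℝ :=
  -(∑ i, ∑ j ∈ univ.filter (fun j => i < j),
      J i j * ∑ s ∈ S, lam s * spin (s i) * spin (s j) * spin (x i) * spin (x j))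

lemma totalH_eq_diagonal_isingEnergy (S : Finset (Fin n → Bool)) :
    totalH n J lam S = diagonal fun x => (isingEnergy J lam S x : ℂ) :=
  rfl

lemma isingEnergy_sub_isingEnergy_sdiff {S C : Finset (Fin n → Bool)} (hC : C ⊆ S)
    (x : Fin n → Bool) :
    isingEnergy J lam S x - isingEnergy J lam (S \ C) x = isingEnergy J lam C x := by
  simp only [isingEnergy, ← sum_sdiff hC, mul_add, sum_add_distrib]
  ring

variable {lam} in
lemma abs_isingEnergy_le (hlam : ∀ s, 0 ≤ lam s) (C : Finset (Fin n → Bool))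
    (x : Fin n → Bool) :
    |isingEnergy J lam C x| ≤
      (∑ i, ∑ j ∈ univ.filter (fun j => i < j), |J i j|) * ∑ s ∈ C, lam s := by
  rw [isingEnergy, abs_neg, sum_mul]
  refine (abs_sum_le_sum_abs _ _).trans (sum_le_sum fun i _ => ?_)
  rw [sum_mul]
  refine (abs_sum_le_sum_abs _ _).trans (sum_le_sum fun j _ => ?_)
  rw [abs_mul]
  refine mul_le_mul_of_nonneg_left ((abs_sum_le_sum_abs _ _).trans_eq ?_) (abs_nonneg _)
  refine sum_congr rfl fun s _ => ?_
  simp only [abs_mul, abs_spin, abs_of_nonneg (hlam s), mul_one]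

end Ising

theorem truncation_error_bound_general (n : ℕ) (J : Matrix (Fin n) (Fin n) ℝ)
    (hsym : J.IsSymm)
    (lam : (Fin n → Bool) → ℝ) (hlam : ∀ s, 0 ≤ lam s)
    (C : Finset (Fin n → Bool)) :
    (1 / 2 : ℝ) * specNorm
        (NormedSpace.exp ((-Complex.I) • totalH n J lam Finset.univ) -
          NormedSpace.exp ((-Complex.I) • totalH n J lam (Finset.univ \ C))) ≤
      (1 / 4 : ℝ) *
        (∑ i : Fin n, ∑ j ∈ Finset.univ.filter (fun j => j ≠ i), |J i j|) *
        (∑ s ∈ C, lam s) := by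
  set A := ∑ i, ∑ j ∈ univ.filter (fun j => i < j), |J i j|
  have henergy :
      ‖isingEnergy J lam univ - isingEnergy J lam (univ \ C)‖ ≤ A * ∑ s ∈ C, lam s := by
    refine (pi_norm_le_iff_of_nonneg
      (mul_nonneg (by positivity) (sum_nonneg fun s _ => hlam s))).2 fun x => ?_
    rw [Real.norm_eq_abs, Pi.sub_apply, isingEnergy_sub_isingEnergy_sdiff J lam (subset_univ C)]
    exact abs_isingEnergy_le J hlam C x
  have hoffDiag : ∑ i, ∑ j ∈ univ.filter (fun j => j ≠ i), |J i j| = 2 * A := by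
    rw [sum_sum_ne_eq_two_nsmul_sum_sum_lt _ fun i j => by rw [hsym.apply j i], nsmul_eq_mul,
      Nat.cast_ofNat]
  rw [totalH_eq_diagonal_isingEnergy, totalH_eq_diagonal_isingEnergy, hoffDiag]
  have hspec := (specNorm_exp_diagonal_sub_exp_diagonal_le _ _).trans henergy
  linarith

/-- The truncation error of the Ising evolution is bounded by the total
truncated time weighted by the interaction strength:
`½‖e^{−iH} − e^{−iH'}‖ ≤ ¼ (Σ_{i≠j} |J_{ij}|) (Σ_{m∈C} λ_m)`, where `H'` is obtained
from `H` by dropping all encodings `m ∈ C`. -/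
theorem truncation_error_bound (n : ℕ) (J : Matrix (Fin n) (Fin n) ℝ)
    (hsym : J.IsSymm) (hdiag : ∀ i, J i i = 0)
    (lam : (Fin n → Bool) → ℝ) (hlam : ∀ s, 0 ≤ lam s)
    (C : Finset (Fin n → Bool)) :
    (1 / 2 : ℝ) * specNorm
        (NormedSpace.exp ((-Complex.I) • totalH n J lam Finset.univ) -
          NormedSpace.exp ((-Complex.I) • totalH n J lam (Finset.univ \ C))) ≤
      (1 / 4 : ℝ) *
        (∑ i : Fin n, ∑ j ∈ Finset.univ.filter (fun j => j ≠ i), |J i j|) *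
        (∑ s ∈ C, lam s) :=
  truncation_error_bound_general n J hsym lam hlam C
end

section
/- Any layer of controlled-Z rotations factorizes into a single GZZ gate and local Z rotations: GCR_Z(A) := ∏_{i<j} CR_Z(A_{ij})_{i,j} = e^{−(i/4)a} · GZZ(A/4) · ∏_{k=1}^n R_Z(b_k/2)_k, where a = Σ_{i<j} A_{ij}, b_k = Σ_j A_{kj}, and GZZ(A) := e^{(i/2) Z^T A Z}. -/
/-!
All gates are diagonal in the computational basis, so the claim is an identity between phases
on each basis state `|x⟩`. Writing `zᵢ = 1 - 2xᵢ = (-1)^{xᵢ}`, every pair satisfies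
`xᵢxⱼ = -1/4 + zᵢzⱼ/4 + (xᵢ + xⱼ)/2`, i.e. `CR_Z(α) = e^{-iα/4} e^{i(α/4) ZᵢZⱼ} R_Z(α/2)ᵢ R_Z(α/2)ⱼ`.
Summing over `i < j`, symmetry and the vanishing diagonal turn the sums over pairs into half of
the full double sums, which produce `GZZ(A/4)` and the local rotations by `bₖ/2`.
-/

open Matrix

/-- The local Z-rotation `R_Z(α)_k |x⟩ = e^{iα x_k} |x⟩`. -/
noncomputable def RZ (n : ℕ) (α : ℝ) (k : Fin n) :
    Matrix (Fin n → Bool) (Fin n → Bool) ℂ :=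
  Matrix.diagonal fun x => Complex.exp (Complex.I * α * (if x k then 1 else 0))

/-- The controlled Z-rotation `CR_Z(α)_{i,j} |x⟩ = e^{iα x_i x_j} |x⟩`. -/
noncomputable def CRZ (n : ℕ) (α : ℝ) (i j : Fin n) :
    Matrix (Fin n → Bool) (Fin n → Bool) ℂ :=
  Matrix.diagonal fun x =>
    Complex.exp (Complex.I * α * (if x i && x j then 1 else 0))

/-- The multi-qubit gate `GZZ(A) = e^{(i/2) Zᵀ A Z}`, i.e.
`GZZ(A)|x⟩ = e^{(i/2) Σ_{i,j} A_{ij} (-1)^{x_i} (-1)^{x_j}} |x⟩`. -/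
noncomputable def GZZ (n : ℕ) (A : Matrix (Fin n) (Fin n) ℝ) :
    Matrix (Fin n → Bool) (Fin n → Bool) ℂ :=
  Matrix.diagonal fun x =>
    Complex.exp ((Complex.I / 2) * ∑ i : Fin n, ∑ j : Fin n,
      (A i j : ℂ) * (if x i then (-1 : ℂ) else 1) * (if x j then (-1 : ℂ) else 1))

lemma diagonal_commute {I : Type*} [Fintype I] [DecidableEq I] (d e : I → ℂ) :
    Commute (Matrix.diagonal d) (Matrix.diagonal e) := by
  have h : (fun i => d i * e i) = fun i => e i * d i := funext fun i => mul_comm _ _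
  unfold Commute SemiconjBy
  rw [Matrix.diagonal_mul_diagonal, Matrix.diagonal_mul_diagonal, h]

lemma crz_commute (n : ℕ) (α β : ℝ) (i j k l : Fin n) :
    Commute (CRZ n α i j) (CRZ n β k l) := diagonal_commute _ _

lemma rz_commute (n : ℕ) (α β : ℝ) (k l : Fin n) :
    Commute (RZ n α k) (RZ n β l) := diagonal_commute _ _

theorem Matrix.noncommProd_diagonal {ι n R : Type*} [Fintype n] [DecidableEq n] [CommSemiring R]
    (s : Finset ι) (d : ι → n → R) (h) :
    s.noncommProd (fun i => diagonal (d i)) h = diagonal fun x => ∏ i ∈ s, d i x := by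
  have hd := s.map_noncommProd d (fun _ _ _ _ _ => Commute.all _ _) (diagonalRingHom n R)
  rw [Finset.noncommProd_eq_prod, Finset.prod_fn] at hd
  exact hd.symm

theorem Finset.two_nsmul_sum_filter_lt {ι M : Type*} [Fintype ι] [LinearOrder ι]
    [AddCommMonoid M] (f : ι → ι → M) (hsymm : ∀ i j, f i j = f j i) (hdiag : ∀ i, f i i = 0) :
    2 • ∑ p ∈ univ.filter (fun p : ι × ι => p.1 < p.2), f p.1 p.2 = ∑ i, ∑ j, f i j := by
  have hsplit : ∀ i j, f i j = (if i < j then f i j else 0) + if j < i then f j i else 0 := by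
    intro i j
    rcases lt_trichotomy i j with hij | rfl | hij
    · simp [hij, hij.not_gt]
    · simp [hdiag]
    · simp [hij, hij.not_gt, hsymm i j]
  have hlt : ∑ p ∈ univ.filter (fun p : ι × ι => p.1 < p.2), f p.1 p.2
      = ∑ i, ∑ j, if i < j then f i j else 0 := by
    rw [sum_filter, ← univ_product_univ, sum_product]
  calc 2 • ∑ p ∈ univ.filter (fun p : ι × ι => p.1 < p.2), f p.1 p.2
      = (∑ i, ∑ j, if i < j then f i j else 0) + ∑ i, ∑ j, if j < i then f j i else 0 := by
        rw [two_nsmul, hlt, sum_comm (f := fun i j => if j < i then f j i else 0)]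
    _ = ∑ i, ∑ j, f i j := by simp only [← sum_add_distrib, ← hsplit]

open Finset in
theorem sum_filter_lt_mul_mul_eq {ι K : Type*} [Fintype ι] [LinearOrder ι] [Field K] [CharZero K]
    (a : ι → ι → K) (hsymm : ∀ i j, a i j = a j i) (hdiag : ∀ i, a i i = 0) (χ : ι → K) :
    ∑ p ∈ univ.filter (fun p : ι × ι => p.1 < p.2), a p.1 p.2 * (χ p.1 * χ p.2) =
      -(1 / 4) * ∑ p ∈ univ.filter (fun p : ι × ι => p.1 < p.2), a p.1 p.2
        + 1 / 8 * ∑ i, ∑ j, a i j * (1 - 2 * χ i) * (1 - 2 * χ j)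
        + 1 / 2 * ∑ k, (∑ j, a k j) * χ k := by
  have hpair : ∀ i j, a i j * (χ i * χ j) = -(1 / 4) * a i j
      + 1 / 4 * (a i j * (1 - 2 * χ i) * (1 - 2 * χ j)) + 1 / 2 * (a i j * χ i + a j i * χ j) := by
    intro i j; rw [← hsymm i j]; ring
  have hquad := two_nsmul_sum_filter_lt (fun i j => a i j * (1 - 2 * χ i) * (1 - 2 * χ j))
    (fun i j => by rw [hsymm]; ring) (fun i => by simp [hdiag])
  have hlin := two_nsmul_sum_filter_lt (fun i j => a i j * χ i + a j i * χ j)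
    (fun i j => add_comm _ _) (fun i => by simp [hdiag])
  have hrow : ∑ i, ∑ j, (a i j * χ i + a j i * χ j) = 2 * ∑ k, (∑ j, a k j) * χ k := by
    simp only [sum_add_distrib]
    rw [sum_comm (f := fun i j => a j i * χ j), ← two_mul]
    simp only [sum_mul]
  simp only [nsmul_eq_mul, Nat.cast_ofNat] at hquad hlin
  rw [sum_congr rfl fun p _ => hpair p.1 p.2, sum_add_distrib, sum_add_distrib, ← mul_sum,
    ← mul_sum, ← mul_sum]
  linear_combination (1 / 8) * hquad + (1 / 4) * (hlin.trans hrow)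

theorem Bool.ite_and_eq_mul {R : Type*} [MulZeroOneClass R] (b c : Bool) :
    (if (b && c) then (1 : R) else 0) = (if b then 1 else 0) * (if c then 1 else 0) := by
  cases b <;> cases c <;> simp

theorem Bool.ite_neg_one_one_eq {R : Type*} [Ring R] (b : Bool) :
    (if b then (-1 : R) else 1) = 1 - 2 * (if b then 1 else 0) := by
  cases b <;> norm_num

/-- Any layer of controlled-Z rotations factorizes into a single `GZZ`
gate and local Z rotations:
`∏_{i<j} CR_Z(A_{ij})_{i,j} = e^{−(i/4)a} · GZZ(A/4) · ∏_k R_Z(b_k/2)_k`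
with `a = Σ_{i<j} A_{ij}` and `b_k = Σ_j A_{kj}`. -/
theorem gcrz_factorization (n : ℕ) (A : Matrix (Fin n) (Fin n) ℝ)
    (hsym : A.IsSymm) (hdiag : ∀ i, A i i = 0) :
    (Finset.univ.filter fun p : Fin n × Fin n => p.1 < p.2).noncommProd
        (fun p => CRZ n (A p.1 p.2) p.1 p.2)
        (fun a _ b _ _ => crz_commute n _ _ _ _ _ _) =
      Complex.exp (-(Complex.I / 4) *
          (∑ p ∈ Finset.univ.filter fun p : Fin n × Fin n => p.1 < p.2,
            (A p.1 p.2 : ℂ))) •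
        (GZZ n ((1 / 4 : ℝ) • A) *
          Finset.univ.noncommProd
            (fun k : Fin n => RZ n ((∑ j : Fin n, A k j) / 2) k)
            (fun a _ b _ _ => rz_commute n _ _ _ _)) := by
  simp only [CRZ, RZ, GZZ, noncommProd_diagonal, diagonal_mul_diagonal, ← diagonal_smul]
  congr 1
  funext x
  simp only [Pi.smul_apply, smul_eq_mul, ← Complex.exp_sum, ← Complex.exp_add]
  congr 1
  obtain ⟨χ, hχ⟩ : ∃ χ : Fin n → ℂ, ∀ i, χ i = if x i then 1 else 0 := ⟨_, fun _ => rfl⟩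
  simp only [Bool.ite_and_eq_mul, Bool.ite_neg_one_one_eq, ← hχ]
  have hgzz : ∑ i, ∑ j, ((((1 / 4 : ℝ) • A) i j : ℝ) : ℂ) * (1 - 2 * χ i) * (1 - 2 * χ j)
      = 1 / 4 * ∑ i, ∑ j, (A i j : ℂ) * (1 - 2 * χ i) * (1 - 2 * χ j) := by
    simp only [Finset.mul_sum, Matrix.smul_apply, smul_eq_mul]
    push_cast
    ring_nf
  have hrz : ∑ k, Complex.I * ((∑ j, A k j) / 2 : ℝ) * χ k
      = Complex.I / 2 * ∑ k, (∑ j, (A k j : ℂ)) * χ k := by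
    simp only [Finset.mul_sum]
    push_cast
    ring_nf
  rw [hgzz, hrz]
  simp only [mul_assoc Complex.I, ← Finset.mul_sum]
  rw [sum_filter_lt_mul_mul_eq (fun i j => (A i j : ℂ))
    (fun i j => by rw [hsym.apply]) (fun i => by simp [hdiag])]
  ring
end
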